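/- Let V be a finite-dimensional symplectic vector space with the copolar space structure on 1-dimensional subspaces, where distinct points a₁, a₂ are collinear iff a₁ ⊄ a₂^⊥ (i.e., the line a₁ + a₂ is regular). Then the collinearity graph is connected with diameter at most 2: any two distinct 1-dimensional subspaces can be joined by a path of length at most 2 of pairwise non-orthogonal points. -/

import Mathlib

/-!
If two points `⟨u⟩, ⟨v⟩` are orthogonal, look for a third point `⟨w⟩` with `ξ(u, w) ≠ 0 ≠ ξ(v, w)`.
By nondegeneracy `u^⊥` and `v^⊥` are proper subspaces, and no vector space is the union of two
proper subspaces, so such a `w` exists; as `ξ` is alternating, `⟨w⟩` differs from `⟨u⟩` and `⟨v⟩`.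
-/

open Module Submodule

theorem Submodule.exists_ne_zero_eq_span_singleton_of_finrank_eq_one
    {K V : Type*} [DivisionRing K] [AddCommGroup V] [Module K V]
    {S : Submodule K V} (hS : finrank K S = 1) :
    ∃ v : V, v ≠ 0 ∧ S = K ∙ v := by
  have hS_ne_bot : S ≠ ⊥ := by
    rintro rfl
    simp at hS
  obtain ⟨v, hvS, hv0⟩ := exists_mem_ne_zero_of_ne_bot hS_ne_bot
  exact ⟨v, hv0, eq_span_singleton_of_mem_of_finrank_eq_one hS hvS hv0⟩

theorem LinearMap.exists_apply_ne_zero_and_apply_ne_zero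
    {R M N : Type*} [Semiring R] [AddCommMonoid M] [AddCommMonoid N] [Module R M] [Module R N]
    {f g : M →ₗ[R] N} (hf : f ≠ 0) (hg : g ≠ 0) :
    ∃ w, f w ≠ 0 ∧ g w ≠ 0 := by
  obtain ⟨x, hfx⟩ : ∃ x, f x ≠ 0 := by simpa [LinearMap.ext_iff] using hf
  obtain ⟨y, hgy⟩ : ∃ y, g y ≠ 0 := by simpa [LinearMap.ext_iff] using hg
  by_cases hgx : g x = 0
  · by_cases hfy : f y = 0
    · exact ⟨x + y, by simpa [hfy], by simpa [hgx]⟩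
    · exact ⟨y, hfy, hgy⟩
  · exact ⟨x, hfx, hgx⟩

namespace LinearMap.BilinForm

variable {R M : Type*} [CommRing R] [AddCommGroup M] [Module R M] {B : LinearMap.BilinForm R M}

theorem span_singleton_le_orthogonal_span_singleton_iff {u v : M} :
    R ∙ u ≤ B.orthogonal (R ∙ v) ↔ B v u = 0 := by
  simp only [span_singleton_le_iff_mem, mem_orthogonal_iff, mem_span_singleton, forall_exists_index,
    forall_apply_eq_imp_iff, map_smul, smul_apply, smul_eq_mul]
  exact ⟨fun h ↦ by simpa using h 1, fun h a ↦ by simp [h]⟩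

theorem Nondegenerate.apply_ne_zero (hB : B.Nondegenerate) {u : M} (hu : u ≠ 0) : B u ≠ 0 :=
  fun h ↦ hu (LinearMap.ker_eq_bot'.mp hB.ker_eq_bot u h)

theorem IsAlt.apply_eq_zero_of_mem_span_singleton (hB : B.IsAlt) {u w : M} (hw : w ∈ R ∙ u) :
    B u w = 0 := by
  obtain ⟨t, rfl⟩ := mem_span_singleton.mp hw
  simp [hB.self_eq_zero]

theorem IsAlt.exists_span_singleton_not_orthogonal_to_both (hnd : B.Nondegenerate)
    (halt : B.IsAlt) {u v : M} (hu : u ≠ 0) (hv : v ≠ 0) :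
    ∃ w, w ≠ 0 ∧ R ∙ w ≠ R ∙ u ∧ R ∙ w ≠ R ∙ v ∧
      ¬ R ∙ u ≤ B.orthogonal (R ∙ w) ∧ ¬ R ∙ w ≤ B.orthogonal (R ∙ v) := by
  obtain ⟨w, huw, hvw⟩ :=
    LinearMap.exists_apply_ne_zero_and_apply_ne_zero (hnd.apply_ne_zero hu) (hnd.apply_ne_zero hv)
  refine ⟨w, fun h ↦ huw (by simp [h]), fun h ↦ huw ?_, fun h ↦ hvw ?_, ?_, ?_⟩
  · exact halt.apply_eq_zero_of_mem_span_singleton (h ▸ mem_span_singleton_self w)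
  · exact halt.apply_eq_zero_of_mem_span_singleton (h ▸ mem_span_singleton_self w)
  · rwa [span_singleton_le_orthogonal_span_singleton_iff, ← halt.eq_iff]
  · rwa [span_singleton_le_orthogonal_span_singleton_iff]

end LinearMap.BilinForm

theorem copolar_space_diameter_two_general
    {K V : Type*} [Field K] [AddCommGroup V] [Module K V]
    (Φ : LinearMap.BilinForm K V) (hnd : Φ.Nondegenerate) (halt : Φ.IsAlt)
    (a₁ a₂ : Submodule K V)
    (h₁ : Module.finrank K a₁ = 1) (h₂ : Module.finrank K a₂ = 1) :
    ¬ a₁ ≤ Φ.orthogonal a₂ ∨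
    ∃ c : Submodule K V, Module.finrank K c = 1 ∧ c ≠ a₁ ∧ c ≠ a₂ ∧
      ¬ a₁ ≤ Φ.orthogonal c ∧ ¬ c ≤ Φ.orthogonal a₂ := by
  obtain ⟨u, hu, rfl⟩ := exists_ne_zero_eq_span_singleton_of_finrank_eq_one h₁
  obtain ⟨v, hv, rfl⟩ := exists_ne_zero_eq_span_singleton_of_finrank_eq_one h₂
  obtain ⟨w, hw, hwu, hwv, huw, hwv'⟩ :=
    halt.exists_span_singleton_not_orthogonal_to_both hnd hu hv
  exact Or.inr ⟨K ∙ w, finrank_span_singleton hw, hwu, hwv, huw, hwv'⟩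

theorem copolar_space_diameter_two
    {K V : Type*} [Field K] [AddCommGroup V] [Module K V] [FiniteDimensional K V]
    (Φ : LinearMap.BilinForm K V) (hnd : Φ.Nondegenerate) (halt : Φ.IsAlt)
    (hchar : (2 : K) ≠ 0) (hV : 4 ≤ Module.finrank K V)
    (a₁ a₂ : Submodule K V)
    (h₁ : Module.finrank K a₁ = 1) (h₂ : Module.finrank K a₂ = 1)
    (hne : a₁ ≠ a₂) :
    ¬ a₁ ≤ Φ.orthogonal a₂ ∨
    ∃ c : Submodule K V, Module.finrank K c = 1 ∧ c ≠ a₁ ∧ c ≠ a₂ ∧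
      ¬ a₁ ≤ Φ.orthogonal c ∧ ¬ c ≤ Φ.orthogonal a₂ :=
  copolar_space_diameter_two_general Φ hnd halt a₁ a₂ h₁ h₂
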